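/- Lower bound in the higher-order Cheeger inequality: let G be a finite weighted graph with signature s : E^{or} → U(1), μ : V → ℝ₊, and let h_n^s(μ) be the n-way Cheeger constant, the minimum over all collections of n pairwise disjoint nonempty subsets V1,…,Vn of V of max_p (ι^s(V_p) + |E(V_p, V_p^c)|)/vol_μ(V_p). Then λ_n(Δ_μ^s) ≤ 2 h_n^s(μ), where λ_n is the n-th smallest eigenvalue of the magnetic Laplacian Δ_μ^s. -/

import Mathlib

open Finset

/-- Rayleigh quotient of `f` for the magnetic Laplacian with weights `w`,
vertex measure `μ` and signature `s` (each unordered edge counted once). -/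
noncomputable def rayleigh {V : Type*} [Fintype V] (G : SimpleGraph V) [DecidableRel G.Adj]
    (w : V → V → ℝ) (μ : V → ℝ) (s : V → V → ℂ) (f : V → ℂ) : ℝ :=
  ((1 / 2) * ∑ u : V, ∑ v : V, if G.Adj u v then w u v * ‖f u - s u v * f v‖ ^ 2 else 0) /
    (∑ u : V, ‖f u‖ ^ 2 * μ u)

/-- The first eigenvalue of the magnetic Laplacian, characterized by the
variational (min-max) principle as the infimum of Rayleigh quotients. -/
noncomputable def lam1 {V : Type*} [Fintype V] (G : SimpleGraph V) [DecidableRel G.Adj]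
    (w : V → V → ℝ) (μ : V → ℝ) (s : V → V → ℂ) : ℝ :=
  sInf { x : ℝ | ∃ f : V → ℂ, f ≠ 0 ∧ x = rayleigh G w μ s f }

/-- Frustration index of `V1` with `U(1)`-valued switching functions. -/
noncomputable def frusIdx {V : Type*} [Fintype V] (G : SimpleGraph V) [DecidableRel G.Adj]
    (w : V → V → ℝ) (s : V → V → ℂ) (V1 : Finset V) : ℝ :=
  sInf { x : ℝ | ∃ τ : V → ℂ, (∀ u, ‖τ u‖ = 1) ∧
    x = (1 / 2) * ∑ u ∈ V1, ∑ v ∈ V1, if G.Adj u v then w u v * ‖τ u - s u v * τ v‖ else 0 }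

/-- Weighted boundary measure `|E(V1, V1ᶜ)|`. -/
noncomputable def bdry {V : Type*} [Fintype V] [DecidableEq V] (G : SimpleGraph V)
    [DecidableRel G.Adj] (w : V → V → ℝ) (V1 : Finset V) : ℝ :=
  ∑ u ∈ V1, ∑ v ∈ V1ᶜ, if G.Adj u v then w u v else 0

/-- `μ`-volume of `V1`. -/
noncomputable def vol {V : Type*} [Fintype V] (μ : V → ℝ) (V1 : Finset V) : ℝ :=
  ∑ u ∈ V1, μ u

/-- The Cheeger constant `h₁ˢ(μ)`. -/
noncomputable def cheeger1 {V : Type*} [Fintype V] [DecidableEq V] (G : SimpleGraph V)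
    [DecidableRel G.Adj] (w : V → V → ℝ) (μ : V → ℝ) (s : V → V → ℂ) : ℝ :=
  sInf { x : ℝ | ∃ V1 : Finset V, V1.Nonempty ∧
    x = (frusIdx G w s V1 + bdry G w V1) / vol μ V1 }

/-- Maximal `μ`-degree `d_μ`. -/
noncomputable def dmu {V : Type*} [Fintype V] (G : SimpleGraph V) [DecidableRel G.Adj]
    (w : V → V → ℝ) (μ : V → ℝ) : ℝ :=
  ⨆ u : V, (∑ v : V, if G.Adj u v then w u v else 0) / μ u

/-!
For disjoint nonempty `V₁, …, Vₙ`, pick on each `Vₚ` a switching function `τₚ` attaining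
the frustration index (it exists by compactness of the torus) and put `fₚ = 1_{Vₚ} τₚ`.
These functions have disjoint supports, hence are `μ`-orthogonal and
`‖∑ cₚ fₚ‖²_μ = ∑ |cₚ|² vol(Vₚ)`. On an edge `uv` the numbers `aₚ = fₚ(u) - s_{uv} fₚ(v)`
satisfy `∑ₚ |aₚ| ≤ 2`, so Cauchy–Schwarz gives `|∑ cₚ aₚ|² ≤ 2 ∑ |cₚ|² |aₚ|`: the quadratic
energy of `g = ∑ cₚ fₚ` is bounded by the `L¹` energies of the `fₚ`, and the `L¹` energy of
`fₚ` is `2 ι(Vₚ) + 2 |E(Vₚ, Vₚᶜ)|`. Hence every `g` in the span has Rayleigh quotient at most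
twice the largest Cheeger ratio.
-/

open Function

theorem sum_comp_eq_comp_sum_of_pairwise {ι E M : Type*} [Fintype ι] [AddCommMonoid E]
    [AddCommMonoid M] (φ : E → M) (hφ : φ 0 = 0) {a : ι → E}
    (ha : Pairwise fun i j => a i = 0 ∨ a j = 0) : ∑ i, φ (a i) = φ (∑ i, a i) := by
  by_cases h : ∃ j, a j ≠ 0
  · obtain ⟨j, hj⟩ := h
    have hzero : ∀ i ≠ j, a i = 0 := fun i hij => (ha hij).resolve_right hj
    rw [Fintype.sum_eq_single j fun i hij => by rw [hzero i hij, hφ],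
      Fintype.sum_eq_single j hzero]
  · push Not at h
    simp [h, hφ]

theorem sum_norm_le_one_of_pairwise {ι E : Type*} [Fintype ι] [SeminormedAddCommGroup E]
    {a : ι → E} (ha : Pairwise fun i j => a i = 0 ∨ a j = 0) (h1 : ∀ i, ‖a i‖ ≤ 1) :
    ∑ i, ‖a i‖ ≤ 1 := by
  by_cases h : ∃ j, a j ≠ 0
  · obtain ⟨j, hj⟩ := h
    rw [Fintype.sum_eq_single j fun i hij => by rw [(ha hij).resolve_right hj, norm_zero]]
    exact h1 j
  · push Not at h
    simp [h]

theorem norm_sum_smul_sq_le {ι 𝕜 E : Type*} [NormedField 𝕜] [SeminormedAddCommGroup E]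
    [NormedSpace 𝕜 E] (t : Finset ι) (c : ι → 𝕜) (a : ι → E) :
    ‖∑ i ∈ t, c i • a i‖ ^ 2 ≤ (∑ i ∈ t, ‖a i‖) * ∑ i ∈ t, ‖c i‖ ^ 2 * ‖a i‖ := by
  calc ‖∑ i ∈ t, c i • a i‖ ^ 2 ≤ (∑ i ∈ t, ‖c i‖ * ‖a i‖) ^ 2 := by
        gcongr
        exact (norm_sum_le _ _).trans_eq (by simp only [norm_smul])
    _ ≤ _ := sum_sq_le_sum_mul_sum_of_sq_le_mul t (fun i _ => norm_nonneg _)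
        (fun i _ => by positivity) (fun i _ => by ring_nf; rfl)

theorem Real.sInf_le_mul_sInf {A B : Set ℝ} {k : ℝ} (hk : 0 < k) (hA : BddBelow A)
    (hB : B.Nonempty) (h : ∀ b ∈ B, ∃ a ∈ A, a ≤ k * b) : sInf A ≤ k * sInf B := by
  rw [← div_le_iff₀' hk]
  refine le_csInf hB fun b hb => ?_
  obtain ⟨a, ha, hab⟩ := h b hb
  rw [div_le_iff₀' hk]
  exact (csInf_le hA ha).trans hab

section MagneticEnergy

variable {V : Type*} [Fintype V] (G : SimpleGraph V) [DecidableRel G.Adj]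
  (w : V → V → ℝ) (s : V → V → ℂ)

noncomputable def dirichletEnergy (f : V → ℂ) : ℝ :=
  (1 / 2) * ∑ u : V, ∑ v : V, if G.Adj u v then w u v * ‖f u - s u v * f v‖ ^ 2 else 0

-- Sums over ordered pairs, so each edge is counted twice, unlike in `rayleigh`.
noncomputable def dirichletEnergyL1 (f : V → ℂ) : ℝ :=
  ∑ u : V, ∑ v : V, if G.Adj u v then w u v * ‖f u - s u v * f v‖ else 0

noncomputable def switchingEnergy (S : Finset V) (τ : V → ℂ) : ℝ :=
  (1 / 2) * ∑ u ∈ S, ∑ v ∈ S, if G.Adj u v then w u v * ‖τ u - s u v * τ v‖ else 0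

noncomputable def massSq (μ : V → ℝ) (f : V → ℂ) : ℝ :=
  ∑ u : V, ‖f u‖ ^ 2 * μ u

theorem rayleigh_eq (μ : V → ℝ) (f : V → ℂ) :
    rayleigh G w μ s f = dirichletEnergy G w s f / massSq μ f := rfl

theorem exists_switchingEnergy_eq_frusIdx (S : Finset V) :
    ∃ τ : V → ℂ, (∀ u, ‖τ u‖ = 1) ∧ switchingEnergy G w s S τ = frusIdx G w s S := by
  have hK : IsCompact (Set.univ.pi fun _ : V => Metric.sphere (0 : ℂ) 1) :=
    isCompact_univ_pi fun _ => isCompact_sphere 0 1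
  have hcont : Continuous (switchingEnergy G w s S) := by
    refine continuous_const.mul <| continuous_finsetSum _ fun u _ =>
      continuous_finsetSum _ fun v _ => ?_
    split_ifs <;> fun_prop
  obtain ⟨τ, hτ, hmin⟩ := hK.exists_isMinOn ⟨fun _ => 1, by simp⟩ hcont.continuousOn
  have hunit : ∀ σ : V → ℂ, σ ∈ Set.univ.pi (fun _ : V => Metric.sphere (0 : ℂ) 1) ↔
      ∀ u, ‖σ u‖ = 1 := by simp
  refine ⟨τ, (hunit τ).1 hτ, ?_⟩
  refine Eq.symm <| IsLeast.csInf_eq ⟨⟨τ, (hunit τ).1 hτ, rfl⟩, ?_⟩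
  rintro _ ⟨σ, hσ, rfl⟩
  exact hmin ((hunit σ).2 hσ)

end MagneticEnergy

section Nonneg

variable {V : Type*} (G : SimpleGraph V) [DecidableRel G.Adj]
  {w : V → V → ℝ} (s : V → V → ℂ)

theorem massSq_nonneg [Fintype V] {μ : V → ℝ} (hμ : ∀ u, 0 ≤ μ u) (f : V → ℂ) :
    0 ≤ massSq μ f :=
  Finset.sum_nonneg fun u _ => mul_nonneg (sq_nonneg _) (hμ u)

theorem rayleigh_nonneg [Fintype V] (hw : ∀ u v, G.Adj u v → 0 ≤ w u v) {μ : V → ℝ}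
    (hμ : ∀ u, 0 ≤ μ u) (f : V → ℂ) : 0 ≤ rayleigh G w μ s f := by
  refine div_nonneg (mul_nonneg one_half_pos.le <| Finset.sum_nonneg fun u _ =>
    Finset.sum_nonneg fun v _ => ?_) (massSq_nonneg hμ f)
  split_ifs with huv
  exacts [mul_nonneg (hw u v huv) (sq_nonneg _), le_rfl]

theorem switchingEnergy_nonneg (hw : ∀ u v, G.Adj u v → 0 ≤ w u v) (S : Finset V)
    (τ : V → ℂ) : 0 ≤ switchingEnergy G w s S τ := by
  refine mul_nonneg one_half_pos.le <| Finset.sum_nonneg fun u _ =>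
    Finset.sum_nonneg fun v _ => ?_
  split_ifs with huv
  exacts [mul_nonneg (hw u v huv) (norm_nonneg _), le_rfl]

theorem frusIdx_nonneg [Fintype V] (hw : ∀ u v, G.Adj u v → 0 ≤ w u v) (S : Finset V) :
    0 ≤ frusIdx G w s S := by
  obtain ⟨τ, -, hτ⟩ := exists_switchingEnergy_eq_frusIdx G w s S
  exact hτ ▸ switchingEnergy_nonneg G s hw S τ

theorem bdry_nonneg [Fintype V] [DecidableEq V] (hw : ∀ u v, G.Adj u v → 0 ≤ w u v)
    (S : Finset V) : 0 ≤ bdry G w S := by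
  refine Finset.sum_nonneg fun u _ => Finset.sum_nonneg fun v _ => ?_
  split_ifs with huv
  exacts [hw u v huv, le_rfl]

end Nonneg

section Indicator

variable {V : Type*} [Fintype V] [DecidableEq V] (G : SimpleGraph V) [DecidableRel G.Adj]
  {w : V → V → ℝ} {s : V → V → ℂ}

theorem dirichletEnergyL1_indicator (hw_sym : ∀ u v, w u v = w v u)
    (hs_unit : ∀ u v, G.Adj u v → ‖s u v‖ = 1) {S : Finset V} {τ : V → ℂ}
    (hτ : ∀ u ∈ S, ‖τ u‖ = 1) :
    dirichletEnergyL1 G w s ((S : Set V).indicator τ) =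
      2 * switchingEnergy G w s S τ + 2 * bdry G w S := by
  set f := (S : Set V).indicator τ
  set F : V → V → ℝ := fun u v => if G.Adj u v then w u v * ‖f u - s u v * f v‖ else 0
  have hin : ∀ u ∈ S, f u = τ u := fun u hu => Set.indicator_of_mem (Finset.mem_coe.2 hu) τ
  have hout : ∀ u ∈ Sᶜ, f u = 0 := fun u hu =>
    Set.indicator_of_notMem (by simpa using hu) τ
  have hSS : ∑ u ∈ S, ∑ v ∈ S, F u v = 2 * switchingEnergy G w s S τ := by
    rw [switchingEnergy, ← mul_assoc, mul_one_div_cancel two_ne_zero, one_mul]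
    refine Finset.sum_congr rfl fun u hu => Finset.sum_congr rfl fun v hv => ?_
    simp only [F, hin u hu, hin v hv]
  have hSSc : ∑ u ∈ S, ∑ v ∈ Sᶜ, F u v = bdry G w S :=
    Finset.sum_congr rfl fun u hu => Finset.sum_congr rfl fun v hv => by
      simp [F, hin u hu, hout v hv, hτ u hu]
  have hScS : ∑ u ∈ Sᶜ, ∑ v ∈ S, F u v = bdry G w S := by
    rw [Finset.sum_comm]
    refine Finset.sum_congr rfl fun v hv => Finset.sum_congr rfl fun u hu => ?_
    by_cases huv : G.Adj u v
    · simp [F, huv, huv.symm, hin v hv, hout u hu, hτ v hv, hs_unit u v huv, hw_sym u v]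
    · simp [F, huv, G.adj_comm v u]
  have hScSc : ∑ u ∈ Sᶜ, ∑ v ∈ Sᶜ, F u v = 0 :=
    Finset.sum_eq_zero fun u hu => Finset.sum_eq_zero fun v hv => by
      simp [F, hout u hu, hout v hv]
  calc dirichletEnergyL1 G w s f = ∑ u, ∑ v, F u v := rfl
    _ = ∑ u ∈ S, (∑ v ∈ S, F u v + ∑ v ∈ Sᶜ, F u v) +
          ∑ u ∈ Sᶜ, (∑ v ∈ S, F u v + ∑ v ∈ Sᶜ, F u v) := by
        simp only [Finset.sum_add_sum_compl]
    _ = _ := by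
        rw [Finset.sum_add_distrib, Finset.sum_add_distrib, hSS, hSSc, hScS, hScSc]
        ring

end Indicator

section Numerator

variable {V : Type*} [Fintype V] (G : SimpleGraph V) [DecidableRel G.Adj]
  {w : V → V → ℝ} {s : V → V → ℂ}

theorem dirichletEnergy_sum_smul_le {ι : Type*} [Fintype ι]
    (hw : ∀ u v, G.Adj u v → 0 ≤ w u v) (f : ι → V → ℂ) (c : ι → ℂ)
    (hf : ∀ u v, G.Adj u v → ∑ p, ‖f p u - s u v * f p v‖ ≤ 2) :
    dirichletEnergy G w s (∑ p, c p • f p) ≤ ∑ p, ‖c p‖ ^ 2 * dirichletEnergyL1 G w s (f p) := by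
  set g := ∑ p, c p • f p
  have hpt : ∀ u v, G.Adj u v →
      ‖g u - s u v * g v‖ ^ 2 ≤ 2 * ∑ p, ‖c p‖ ^ 2 * ‖f p u - s u v * f p v‖ := by
    intro u v huv
    have hdiff : g u - s u v * g v = ∑ p, c p • (f p u - s u v * f p v) := by
      simp only [g, Finset.sum_apply, Pi.smul_apply, smul_eq_mul, Finset.mul_sum,
        ← Finset.sum_sub_distrib, mul_sub, mul_left_comm]
    rw [hdiff]
    refine (norm_sum_smul_sq_le _ c _).trans ?_
    gcongr
    exact hf u v huv
  calc dirichletEnergy G w s g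
      ≤ (1 / 2) * ∑ u, ∑ v, if G.Adj u v then
          w u v * (2 * ∑ p, ‖c p‖ ^ 2 * ‖f p u - s u v * f p v‖) else 0 := by
        unfold dirichletEnergy
        gcongr with u _ v _
        split_ifs with huv
        · exact mul_le_mul_of_nonneg_left (hpt u v huv) (hw u v huv)
        · rfl
    _ = ∑ u, ∑ v, ∑ p,
          ‖c p‖ ^ 2 * (if G.Adj u v then w u v * ‖f p u - s u v * f p v‖ else 0) := by
        rw [Finset.mul_sum]
        refine Finset.sum_congr rfl fun u _ => ?_
        rw [Finset.mul_sum]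
        refine Finset.sum_congr rfl fun v _ => ?_
        split_ifs
        · rw [Finset.mul_sum, Finset.mul_sum, Finset.mul_sum]
          exact Finset.sum_congr rfl fun p _ => by ring
        · simp
    _ = ∑ p, ‖c p‖ ^ 2 * dirichletEnergyL1 G w s (f p) := by
        simp only [dirichletEnergyL1, Finset.mul_sum]
        exact (Finset.sum_congr rfl fun u _ => Finset.sum_comm).trans Finset.sum_comm

end Numerator

section DisjointFamily

variable {V ι : Type*}

theorem massSq_sum_smul_of_pairwise [Fintype V] [Fintype ι] (μ : V → ℝ) {f : ι → V → ℂ}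
    (hf : ∀ u, Pairwise fun p q => f p u = 0 ∨ f q u = 0) (c : ι → ℂ) :
    massSq μ (∑ p, c p • f p) = ∑ p, ‖c p‖ ^ 2 * massSq μ (f p) := by
  have hpt : ∀ u, ‖(∑ p, c p • f p) u‖ ^ 2 = ∑ p, ‖c p‖ ^ 2 * ‖f p u‖ ^ 2 := by
    intro u
    have hcf : Pairwise fun p q => c p * f p u = 0 ∨ c q * f q u = 0 := fun p q hpq =>
      (hf u hpq).imp (fun h => by rw [h, mul_zero]) (fun h => by rw [h, mul_zero])
    simp only [Finset.sum_apply, Pi.smul_apply, smul_eq_mul,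
      ← sum_comp_eq_comp_sum_of_pairwise (‖·‖ ^ 2) (by simp) hcf, norm_mul, mul_pow]
  simp only [massSq, hpt, Finset.sum_mul, Finset.mul_sum, mul_assoc]
  exact Finset.sum_comm

theorem massSq_indicator [Fintype V] (μ : V → ℝ) {S : Finset V} {τ : V → ℂ}
    (hτ : ∀ u ∈ S, ‖τ u‖ = 1) :
    massSq μ ((S : Set V).indicator τ) = vol μ S := by
  rw [massSq, vol, ← Finset.sum_subset (Finset.subset_univ S) fun u _ hu => by simp [hu]]
  exact Finset.sum_congr rfl fun u hu => by simp [hu, hτ u hu]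

variable {Vs : ι → Finset V} {τ : ι → V → ℂ}

theorem indicator_pairwise_eq_zero (hVs : Pairwise (Disjoint on Vs)) (u : V) :
    Pairwise fun p q => (Vs p : Set V).indicator (τ p) u = 0 ∨
      (Vs q : Set V).indicator (τ q) u = 0 := by
  intro p q hpq
  by_cases hu : u ∈ Vs p
  · exact Or.inr (Set.indicator_of_notMem (Finset.disjoint_left.1 (hVs hpq) hu) _)
  · exact Or.inl (Set.indicator_of_notMem hu _)

theorem sum_norm_indicator_sub_le_two [Fintype ι] (hVs : Pairwise (Disjoint on Vs))
    (hτ : ∀ p u, ‖τ p u‖ = 1) {z : ℂ} (hz : ‖z‖ = 1) (u v : V) :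
    ∑ p, ‖(Vs p : Set V).indicator (τ p) u - z * (Vs p : Set V).indicator (τ p) v‖ ≤ 2 := by
  have hle : ∀ x, ∑ p, ‖(Vs p : Set V).indicator (τ p) x‖ ≤ 1 := fun x =>
    sum_norm_le_one_of_pairwise (indicator_pairwise_eq_zero hVs x) fun p =>
      (norm_indicator_le_norm_self _ _).trans (hτ p x).le
  calc _ ≤ ∑ p, (‖(Vs p : Set V).indicator (τ p) u‖ + ‖(Vs p : Set V).indicator (τ p) v‖) :=
        Finset.sum_le_sum fun p _ => (norm_sub_le _ _).trans_eq (by rw [norm_mul, hz, one_mul])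
    _ ≤ 2 := by
        rw [Finset.sum_add_distrib]
        linarith [hle u, hle v]

end DisjointFamily

theorem rayleigh_le_of_mem_span_indicator {V ι : Type*} [Fintype V] [DecidableEq V]
    [Fintype ι] (G : SimpleGraph V) [DecidableRel G.Adj] {w : V → V → ℝ} {μ : V → ℝ} {s : V → V → ℂ}
    (hw_sym : ∀ u v, w u v = w v u) (hw : ∀ u v, G.Adj u v → 0 ≤ w u v)
    (hμ : ∀ u, 0 ≤ μ u) (hs_unit : ∀ u v, G.Adj u v → ‖s u v‖ = 1)
    {Vs : ι → Finset V} (hVs : Pairwise (Disjoint on Vs)) {τ : ι → V → ℂ}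
    (hτ : ∀ p u, ‖τ p u‖ = 1) {K : ℝ} (hK0 : 0 ≤ K)
    (hK : ∀ p, switchingEnergy G w s (Vs p) (τ p) + bdry G w (Vs p) ≤ K * vol μ (Vs p))
    {g : V → ℂ}
    (hg : g ∈ Submodule.span ℂ (Set.range fun p => (Vs p : Set V).indicator (τ p))) :
    rayleigh G w μ s g ≤ 2 * K := by
  obtain ⟨c, rfl⟩ := (Submodule.mem_span_range_iff_exists_fun ℂ).1 hg
  set f := fun p => (Vs p : Set V).indicator (τ p)
  rw [rayleigh_eq]
  refine div_le_of_le_mul₀ (massSq_nonneg hμ _) (by positivity) ?_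
  calc dirichletEnergy G w s (∑ p, c p • f p)
      ≤ ∑ p, ‖c p‖ ^ 2 * dirichletEnergyL1 G w s (f p) :=
        dirichletEnergy_sum_smul_le G hw f c fun u v huv =>
          sum_norm_indicator_sub_le_two hVs hτ (hs_unit u v huv) u v
    _ ≤ ∑ p, ‖c p‖ ^ 2 * (2 * K * vol μ (Vs p)) := by
        gcongr with p
        rw [dirichletEnergyL1_indicator G hw_sym hs_unit fun u _ => hτ p u]
        linarith [hK p]
    _ = 2 * K * massSq μ (∑ p, c p • f p) := by
        rw [massSq_sum_smul_of_pairwise μ (indicator_pairwise_eq_zero hVs) c, Finset.mul_sum]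
        refine Finset.sum_congr rfl fun p _ => ?_
        rw [massSq_indicator μ fun u _ => hτ p u]
        ring

theorem exists_orthogonal_family_sSup_rayleigh_le {V ι : Type*} [Fintype V] [DecidableEq V]
    [Fintype ι] (G : SimpleGraph V) [DecidableRel G.Adj] {w : V → V → ℝ} {μ : V → ℝ}
    {s : V → V → ℂ} (hw_sym : ∀ u v, w u v = w v u) (hw : ∀ u v, G.Adj u v → 0 ≤ w u v)
    (hμ : ∀ u, 0 < μ u) (hs_unit : ∀ u v, G.Adj u v → ‖s u v‖ = 1) {Vs : ι → Finset V}
    (hne : ∀ p, (Vs p).Nonempty) (hVs : Pairwise (Disjoint on Vs)) {K : ℝ} (hK0 : 0 ≤ K)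
    (hK : ∀ p, (frusIdx G w s (Vs p) + bdry G w (Vs p)) / vol μ (Vs p) ≤ K) :
    ∃ f : ι → V → ℂ, (∀ p, f p ≠ 0) ∧
      (∀ p q, p ≠ q → ∑ u : V, f p u * (starRingEnd ℂ) (f q u) * (μ u : ℂ) = 0) ∧
      sSup {y : ℝ | ∃ g : V → ℂ, g ∈ Submodule.span ℂ (Set.range f) ∧ g ≠ 0 ∧
        y = rayleigh G w μ s g} ≤ 2 * K := by
  choose τ hτ hτmin using fun p => exists_switchingEnergy_eq_frusIdx G w s (Vs p)
  refine ⟨fun p => (Vs p : Set V).indicator (τ p), fun p => ?_, fun p q hpq => ?_, ?_⟩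
  · obtain ⟨u, hu⟩ := hne p
    exact Function.ne_iff.2 ⟨u, by simp [hu, ← norm_ne_zero_iff, hτ]⟩
  · refine Finset.sum_eq_zero fun u _ => ?_
    rcases indicator_pairwise_eq_zero (τ := τ) hVs u hpq with h | h <;>
      simp only [h, map_zero, zero_mul, mul_zero]
  refine Real.sSup_le (fun _ ⟨_, hg, _, hy⟩ => hy ▸ rayleigh_le_of_mem_span_indicator G hw_sym
    hw (fun u => (hμ u).le) hs_unit hVs hτ hK0 (fun p => ?_) hg) (by positivity)
  have hvol : 0 < vol μ (Vs p) := Finset.sum_pos (fun u _ => hμ u) (hne p)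
  rw [hτmin p, ← div_le_iff₀ hvol]
  exact hK p

theorem exists_pairwise_disjoint_nonempty_finsets {V : Type*} [Fintype V] {n : ℕ}
    (hn : n ≤ Fintype.card V) :
    ∃ Vs : Fin n → Finset V, (∀ p, (Vs p).Nonempty) ∧ ∀ p q, p ≠ q → Disjoint (Vs p) (Vs q) := by
  obtain ⟨e⟩ : Nonempty (Fin n ↪ V) := Function.Embedding.nonempty_of_card_le (by simpa using hn)
  exact ⟨fun p => {e p}, fun p => Finset.singleton_nonempty _,
    fun p q hpq => Finset.disjoint_singleton.2 (e.injective.ne hpq)⟩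

theorem stmt_19_general {V : Type*} [Fintype V] [DecidableEq V] (G : SimpleGraph V) [DecidableRel G.Adj]
    (w : V → V → ℝ) (μ : V → ℝ) (s : V → V → ℂ)
    (hw_sym : ∀ u v, w u v = w v u)
    (hw_pos : ∀ u v, G.Adj u v → 0 < w u v)
    (hμ : ∀ u, 0 < μ u)
    (hs_unit : ∀ u v, G.Adj u v → ‖s u v‖ = 1)
    (n : ℕ) (hcard : n ≤ Fintype.card V) :
    -- the n-th eigenvalue, via the Courant–Fischer min-max principle over
    -- families of n pairwise μ-orthogonal nonzero functions
    sInf { x : ℝ | ∃ f : Fin n → V → ℂ, (∀ p, f p ≠ 0) ∧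
        (∀ p q, p ≠ q → ∑ u : V, f p u * (starRingEnd ℂ) (f q u) * (μ u : ℂ) = 0) ∧
        x = sSup { y : ℝ | ∃ g : V → ℂ, g ∈ Submodule.span ℂ (Set.range f) ∧ g ≠ 0 ∧
          y = rayleigh G w μ s g } } ≤
    -- twice the n-way Cheeger constant
    2 * sInf { x : ℝ | ∃ Vs : Fin n → Finset V, (∀ p, (Vs p).Nonempty) ∧
        (∀ p q, p ≠ q → Disjoint (Vs p) (Vs q)) ∧
        x = sSup { y : ℝ | ∃ p : Fin n,
          y = (frusIdx G w s (Vs p) + bdry G w (Vs p)) / vol μ (Vs p) } } := by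
  have hw : ∀ u v, G.Adj u v → 0 ≤ w u v := fun u v h => (hw_pos u v h).le
  refine Real.sInf_le_mul_sInf two_pos ⟨0, ?_⟩ ?_ ?_
  · rintro _ ⟨f, -, -, rfl⟩
    exact Real.sSup_nonneg fun _ ⟨_, _, _, hy⟩ =>
      hy ▸ rayleigh_nonneg G s hw (fun u => (hμ u).le) _
  · obtain ⟨Vs, hne, hdisj⟩ := exists_pairwise_disjoint_nonempty_finsets hcard
    exact ⟨_, Vs, hne, hdisj, rfl⟩
  rintro _ ⟨Vs, hne, hdisj, rfl⟩
  set ratio := fun p => (frusIdx G w s (Vs p) + bdry G w (Vs p)) / vol μ (Vs p)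
  have hratio : ∀ p, ratio p ≤ sSup {y | ∃ p, y = ratio p} := fun p =>
    le_csSup ((Set.finite_range ratio).subset (by rintro _ ⟨q, rfl⟩; exact ⟨q, rfl⟩)).bddAbove
      ⟨p, rfl⟩
  have hmax : 0 ≤ sSup {y | ∃ p, y = ratio p} := Real.sSup_nonneg fun _ ⟨p, hp⟩ =>
    hp ▸ div_nonneg (add_nonneg (frusIdx_nonneg G s hw _) (bdry_nonneg G hw _))
      (Finset.sum_nonneg fun u _ => (hμ u).le)
  obtain ⟨f, hf0, horth, hle⟩ := exists_orthogonal_family_sSup_rayleigh_le G hw_sym hw hμ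
    hs_unit hne (fun p q hpq => hdisj p q hpq) hmax hratio
  exact ⟨_, ⟨f, hf0, horth, rfl⟩, hle⟩

theorem stmt_19 {V : Type*} [Fintype V] [DecidableEq V] (G : SimpleGraph V) [DecidableRel G.Adj]
    (w : V → V → ℝ) (μ : V → ℝ) (s : V → V → ℂ)
    (hw_sym : ∀ u v, w u v = w v u)
    (hw_pos : ∀ u v, G.Adj u v → 0 < w u v)
    (hμ : ∀ u, 0 < μ u)
    (hs_unit : ∀ u v, G.Adj u v → ‖s u v‖ = 1)
    (hs_inv : ∀ u v, G.Adj u v → s v u = (s u v)⁻¹)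
    (n : ℕ) (hn : 0 < n) (hcard : n ≤ Fintype.card V) :
    -- the n-th eigenvalue, via the Courant–Fischer min-max principle over
    -- families of n pairwise μ-orthogonal nonzero functions
    sInf { x : ℝ | ∃ f : Fin n → V → ℂ, (∀ p, f p ≠ 0) ∧
        (∀ p q, p ≠ q → ∑ u : V, f p u * (starRingEnd ℂ) (f q u) * (μ u : ℂ) = 0) ∧
        x = sSup { y : ℝ | ∃ g : V → ℂ, g ∈ Submodule.span ℂ (Set.range f) ∧ g ≠ 0 ∧
          y = rayleigh G w μ s g } } ≤
    -- twice the n-way Cheeger constant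
    2 * sInf { x : ℝ | ∃ Vs : Fin n → Finset V, (∀ p, (Vs p).Nonempty) ∧
        (∀ p q, p ≠ q → Disjoint (Vs p) (Vs q)) ∧
        x = sSup { y : ℝ | ∃ p : Fin n,
          y = (frusIdx G w s (Vs p) + bdry G w (Vs p)) / vol μ (Vs p) } } :=
  stmt_19_general G w μ s hw_sym hw_pos hμ hs_unit n hcard
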